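/- Let A, B ∈ M₂(ℂ) both be traceless and q ∈ ℝ. Then ‖AB − qBA‖_F² ≤ (1 + q²)‖A‖_F²‖B‖_F². -/

import Mathlib

open Matrix
open scoped BigOperators Matrix

noncomputable def frobSq (M : Matrix (Fin 2) (Fin 2) ℂ) : ℝ :=
  ∑ i, ∑ j, ‖M i j‖ ^ 2

/-! For traceless `2 × 2` matrices the anticommutator is scalar, `AB + BA = tr(AB) • 1`, so
`AB - qBA = ((1 - q)/2) tr(AB) • 1 + ((1 + q)/2) [A, B]` splits into a scalar and a traceless
part, which are Frobenius-orthogonal. Both parts are controlled by the Lagrange identity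
`‖[A, B]‖² + 2 |tr(A Bᴴ)|² = 2 ‖A‖² ‖B‖²`: directly for the commutator, and with `Bᴴ` in place
of `B` for `|tr(AB)|² ≤ ‖A‖² ‖B‖²`. Since `(1 - q)²/2 + (1 + q)²/2 = 1 + q²`, the two bounds add
up to the claim. -/

open ComplexConjugate

section Traceless

variable {A B K : Matrix (Fin 2) (Fin 2) ℂ}

theorem ofReal_frobSq (M : Matrix (Fin 2) (Fin 2) ℂ) :
    (frobSq M : ℂ) = ∑ i, ∑ j, M i j * conj (M i j) := by
  simp only [frobSq, Complex.ofReal_sum, Complex.ofReal_pow, Complex.mul_conj']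

theorem frobSq_smul (c : ℂ) (M : Matrix (Fin 2) (Fin 2) ℂ) :
    frobSq (c • M) = ‖c‖ ^ 2 * frobSq M := by
  simp only [frobSq, Matrix.smul_apply, smul_eq_mul, norm_mul, mul_pow, Finset.mul_sum]

theorem frobSq_conjTranspose (M : Matrix (Fin 2) (Fin 2) ℂ) : frobSq Mᴴ = frobSq M := by
  simp only [frobSq, conjTranspose_apply, norm_star, Fin.sum_univ_two]
  ring

theorem frobSq_nonneg (M : Matrix (Fin 2) (Fin 2) ℂ) : 0 ≤ frobSq M := by
  unfold frobSq
  positivity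

theorem Matrix.apply_one_one_of_trace_eq_zero {R : Type*} [AddCommGroup R]
    {M : Matrix (Fin 2) (Fin 2) R} (hM : M.trace = 0) : M 1 1 = -M 0 0 := by
  rwa [trace_fin_two, add_eq_zero_iff_neg_eq, eq_comm] at hM

theorem Matrix.trace_conjTranspose_eq_zero (hA : A.trace = 0) : Aᴴ.trace = 0 := by
  rw [trace_conjTranspose, hA, star_zero]

theorem frobSq_smul_one_add (x : ℂ) (hK : K.trace = 0) :
    frobSq (x • 1 + K) = 2 * ‖x‖ ^ 2 + frobSq K := by
  apply Complex.ofReal_injective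
  push_cast
  simp only [ofReal_frobSq, Matrix.add_apply, Matrix.smul_apply, smul_eq_mul, map_add,
    map_mul, Fin.sum_univ_two, Matrix.one_apply_eq, Matrix.one_apply_ne zero_ne_one,
    Matrix.one_apply_ne one_ne_zero, mul_one, mul_zero, zero_add, map_one, map_zero,
    apply_one_one_of_trace_eq_zero hK, map_neg, ← Complex.mul_conj']
  ring

theorem mul_add_mul_eq_trace_smul_one (hA : A.trace = 0) (hB : B.trace = 0) :
    A * B + B * A = (A * B).trace • 1 := by
  ext i j
  fin_cases i <;> fin_cases j <;>
    simp only [Fin.zero_eta, Fin.mk_one, Fin.isValue, Matrix.add_apply, Matrix.mul_apply,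
      Fin.sum_univ_two, trace_fin_two, apply_one_one_of_trace_eq_zero hA,
      apply_one_one_of_trace_eq_zero hB, Matrix.smul_apply, Matrix.one_apply_eq,
      Matrix.one_apply_ne zero_ne_one, Matrix.one_apply_ne one_ne_zero, smul_eq_mul, mul_one,
      mul_zero] <;> ring

/-- In Pauli coordinates `A = a • σ`, `B = b • σ` this is the Lagrange identity
`|a × b|² + |a ⬝ conj b|² = |a|² |b|²` for complex vectors `a, b ∈ ℂ³`. -/
theorem frobSq_commutator_add_two_mul_norm_trace_mul_conjTranspose_sq
    (hA : A.trace = 0) (hB : B.trace = 0) :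
    frobSq (A * B - B * A) + 2 * ‖(A * Bᴴ).trace‖ ^ 2 = 2 * frobSq A * frobSq B := by
  apply Complex.ofReal_injective
  push_cast
  simp only [ofReal_frobSq, Matrix.sub_apply, Matrix.mul_apply, Fin.sum_univ_two, map_sub,
    map_add, map_mul, map_neg, apply_one_one_of_trace_eq_zero hA,
    apply_one_one_of_trace_eq_zero hB, trace_fin_two, conjTranspose_apply, RCLike.star_def,
    Complex.conj_conj, ← Complex.mul_conj']
  ring

theorem frobSq_commutator_le (hA : A.trace = 0) (hB : B.trace = 0) :
    frobSq (A * B - B * A) ≤ 2 * frobSq A * frobSq B := by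
  rw [← frobSq_commutator_add_two_mul_norm_trace_mul_conjTranspose_sq hA hB]
  exact le_add_of_nonneg_right (by positivity)

theorem norm_trace_mul_sq_le (hA : A.trace = 0) (hB : B.trace = 0) :
    ‖(A * B).trace‖ ^ 2 ≤ frobSq A * frobSq B := by
  have h := frobSq_commutator_add_two_mul_norm_trace_mul_conjTranspose_sq hA
    (trace_conjTranspose_eq_zero hB)
  rw [conjTranspose_conjTranspose, frobSq_conjTranspose] at h
  linarith [frobSq_nonneg (A * Bᴴ - Bᴴ * A)]

theorem mul_sub_smul_mul_eq_smul_one_add_smul_commutator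
    (hA : A.trace = 0) (hB : B.trace = 0) (q : ℝ) :
    A * B - (q : ℂ) • (B * A) =
      (((1 - q) / 2 : ℝ) * (A * B).trace) • 1 + (((1 + q) / 2 : ℝ) : ℂ) • (A * B - B * A) := by
  rw [mul_smul, ← mul_add_mul_eq_trace_smul_one hA hB]
  push_cast
  module

theorem frobSq_mul_sub_smul_mul (hA : A.trace = 0) (hB : B.trace = 0) (q : ℝ) :
    frobSq (A * B - (q : ℂ) • (B * A)) =
      (1 - q) ^ 2 / 2 * ‖(A * B).trace‖ ^ 2 + (1 + q) ^ 2 / 4 * frobSq (A * B - B * A) := by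
  have hK : ((((1 + q) / 2 : ℝ) : ℂ) • (A * B - B * A)).trace = 0 := by
    rw [trace_smul, trace_sub, trace_mul_comm, sub_self, smul_zero]
  rw [mul_sub_smul_mul_eq_smul_one_add_smul_commutator hA hB, frobSq_smul_one_add _ hK,
    frobSq_smul]
  simp only [norm_mul, Complex.norm_real, Real.norm_eq_abs, mul_pow, sq_abs]
  ring

end Traceless

theorem stmt_16 (A B : Matrix (Fin 2) (Fin 2) ℂ)
    (hA : A.trace = 0) (hB : B.trace = 0) (q : ℝ) :
    frobSq (A * B - (q : ℂ) • (B * A)) ≤ (1 + q ^ 2) * frobSq A * frobSq B := by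
  calc frobSq (A * B - (q : ℂ) • (B * A))
      = (1 - q) ^ 2 / 2 * ‖(A * B).trace‖ ^ 2 + (1 + q) ^ 2 / 4 * frobSq (A * B - B * A) :=
        frobSq_mul_sub_smul_mul hA hB q
    _ ≤ (1 - q) ^ 2 / 2 * (frobSq A * frobSq B) + (1 + q) ^ 2 / 4 * (2 * frobSq A * frobSq B) := by
        gcongr
        · exact norm_trace_mul_sq_le hA hB
        · exact frobSq_commutator_le hA hB
    _ = (1 + q ^ 2) * frobSq A * frobSq B := by ring
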